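/- Let f : Ω₁ → ℝ be N-local and bounded. Then for every n ≥ 1 and η ∈ Ω₁: |Lⁿ f(η)| ≤ (|I_{−N−n}(η)| + … + |I_{N+n}(η)|)ⁿ · 2ⁿ · ‖f‖_∞, where Lⁿ denotes the n-th iterate of the formal generator L. -/

import Mathlib

/-!
If `i ∈ I_{w+1}`, i.e. `X w < i ≤ X (w + 1)`, toppling at `i` merges the two ones `X w` and
`X (w + 1)` into the single one `X w + X (w + 1) - i` (when `η i = 1` this just deletes
`i = X (w + 1)`). So the enumeration of the ones of `T i η` is that of `η` with indices shifted by
at most one: its `j`-th one lies in `[X (j - 1), X (j + 1)]`, and it equals `X j` for all `j` in a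
window around `0` when `i` is far from that window. Consequently, for `M`-local `g`, only the
sites of `I_{-M-1} ∪ ⋯ ∪ I_{M+1}` contribute to `L g η`, which makes `L g` an `(M + 1)`-local
finite sum of `X (M + 1) - X (-M - 2)` terms. In the induction on `n`, each term
`g (T i η) - g η` is at most twice the level-`n` bound, because the level-`N + n` windows of both
`T i η` and `η` lie inside the level-`(N + n + 1)` window of `η`.
-/

open Filter

noncomputable section

attribute [local instance] Classical.propDecidable

/-- A configuration of the one-dimensional sandpile: heights in `{1,2}`. -/
def IsConfig (η : ℤ → ℤ) : Prop := ∀ x, η x = 1 ∨ η x = 2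

/-- The indicator function of site `i`. -/
def e (i : ℤ) : ℤ → ℤ := fun x => if x = i then 1 else 0

/-- `Kp i η = {j ≥ 0 : η (i+j) = 1}`. -/
def Kp (i : ℤ) (η : ℤ → ℤ) : Set ℕ := {j : ℕ | η (i + (j : ℤ)) = 1}

/-- `Km i η = {j > 0 : η (i−j) = 1}`. -/
def Km (i : ℤ) (η : ℤ → ℤ) : Set ℕ := {j : ℕ | 0 < j ∧ η (i - (j : ℤ)) = 1}

/-- `k⁺(i,η)`, meaningful when `Kp i η` is nonempty (i.e. `k⁺(i,η) < ∞`). -/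
noncomputable def kplus (i : ℤ) (η : ℤ → ℤ) : ℕ := sInf (Kp i η)

/-- `k⁻(i,η)`, meaningful when `Km i η` is nonempty (i.e. `k⁻(i,η) < ∞`). -/
noncomputable def kminus (i : ℤ) (η : ℤ → ℤ) : ℕ := sInf (Km i η)

/-- The toppling transformation `T i`, by the five cases of the paper. -/
noncomputable def T (i : ℤ) (η : ℤ → ℤ) : ℤ → ℤ :=
  if η i = 1 then η + e i
  else if (Kp i η).Nonempty then
    if (Km i η).Nonempty then
      η + e (i + (kplus i η : ℤ)) + e (i - (kminus i η : ℤ))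
        - e (i + (kplus i η : ℤ) - (kminus i η : ℤ))
    else η + e (i + (kplus i η : ℤ))
  else if (Km i η).Nonempty then η + e (i - (kminus i η : ℤ))
  else η

/-- `Ω₁`: configurations with infinitely many ones to the left and to the right of the
origin. -/
def Omega1 (η : ℤ → ℤ) : Prop :=
  IsConfig η ∧ {i : ℤ | i < 0 ∧ η i = 1}.Infinite ∧ {i : ℤ | 0 < i ∧ η i = 1}.Infinite

/-- `X : ℤ → ℤ` is the increasing enumeration of `η⁻¹({1})` normalized so that
`X 0 = min {i ≥ 0 : η i = 1}`. -/
def IsEnum (η : ℤ → ℤ) (X : ℤ → ℤ) : Prop :=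
  StrictMono X ∧ (∀ i, η (X i) = 1) ∧ (∀ j, η j = 1 → ∃ i, X i = j) ∧
    0 ≤ X 0 ∧ ∀ j, 0 ≤ j → η j = 1 → X 0 ≤ j

/-- A function `f` on configurations is `N`-local if `f η` depends only on the values of
`η` on `⋃_{j=-N}^{N} I_j(η)`, where `I_j(η) = (X_{j-1}(η), X_j(η)]`.  Since on each
interval `I_j` a configuration equals `2` except for the value `1` at the right endpoint
`X_j`, this is equivalent to saying that `f η` depends only on
`(X_{-N-1}(η), …, X_N(η))`. -/
def IsNLocal (N : ℕ) (f : (ℤ → ℤ) → ℝ) : Prop :=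
  ∀ η ζ Xη Xζ, Omega1 η → Omega1 ζ → IsEnum η Xη → IsEnum ζ Xζ →
    (∀ j : ℤ, -(N : ℤ) - 1 ≤ j → j ≤ (N : ℤ) → Xη j = Xζ j) → f η = f ζ

/-- The formal generator `L f (η) = Σ_{i ∈ ℤ} [f (T_i η) − f η]` (as a `tsum`). -/
noncomputable def Lgen (f : (ℤ → ℤ) → ℝ) : (ℤ → ℤ) → ℝ :=
  fun η => ∑' i : ℤ, (f (T i η) - f η)


lemma StrictMono.int_add_sub_le {X : ℤ → ℤ} (hX : StrictMono X) {a b : ℤ} (hab : a ≤ b) :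
    X a + (b - a) ≤ X b := by
  induction b, hab using Int.leInduction with
  | base => simp
  | succ b _ ih => have := hX (lt_add_one b); omega

/-- The `w` with `i ∈ I_{w+1}`; junk value `0` if there is none. -/
def intervalIdx (X : ℤ → ℤ) (i : ℤ) : ℤ :=
  if h : ∃ w, X w < i ∧ i ≤ X (w + 1) then h.choose else 0

section IntervalIdx

variable {X : ℤ → ℤ} {i w : ℤ}

lemma StrictMono.exists_interval (hX : StrictMono X) (i : ℤ) :
    ∃ w, X w < i ∧ i ≤ X (w + 1) := by
  set d := |i - X 0|
  have hd := le_abs_self (i - X 0)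
  have hd' := neg_abs_le (i - X 0)
  have hbelow : X (-d - 1) < i := by
    have := hX.int_add_sub_le (show -d - 1 ≤ 0 by omega)
    omega
  have hbdd : ∀ j, X j < i → j ≤ d := fun j hj => by
    by_contra! h
    have := hX.int_add_sub_le (show 0 ≤ j by omega)
    omega
  obtain ⟨w, hw, hmax⟩ := Int.exists_greatest_of_bdd ⟨d, hbdd⟩ ⟨_, hbelow⟩
  exact ⟨w, hw, not_lt.mp fun h => by have := hmax _ h; omega⟩

lemma intervalIdx_spec (hX : StrictMono X) (i : ℤ) :
    X (intervalIdx X i) < i ∧ i ≤ X (intervalIdx X i + 1) := by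
  have h := hX.exists_interval i
  rw [intervalIdx, dif_pos h]
  exact h.choose_spec

lemma intervalIdx_eq (hX : StrictMono X) (hlt : X w < i) (hle : i ≤ X (w + 1)) :
    intervalIdx X i = w := by
  obtain ⟨hlt', hle'⟩ := intervalIdx_spec hX i
  by_contra hne
  rcases lt_or_gt_of_ne hne with h | h
  · have := hX.monotone (show intervalIdx X i + 1 ≤ w by omega)
    omega
  · have := hX.monotone (show w + 1 ≤ intervalIdx X i by omega)
    omega

end IntervalIdx

namespace IsEnum

variable {η X : ℤ → ℤ} {i j w y : ℤ}

lemma lt_zero (hX : IsEnum η X) (hj : j < 0) : X j < 0 := by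
  by_contra! h
  exact (hX.1 hj).not_ge (hX.2.2.2.2 _ h (hX.2.1 j))

lemma succ_le_of_lt (hX : IsEnum η X) (hw : X w < y) (hy : η y = 1) : X (w + 1) ≤ y := by
  obtain ⟨m, rfl⟩ := hX.2.2.1 y hy
  exact hX.1.monotone (by have := hX.1.lt_iff_lt.mp hw; omega)

lemma le_of_lt_succ (hX : IsEnum η X) (hw : y < X (w + 1)) (hy : η y = 1) : y ≤ X w := by
  obtain ⟨m, rfl⟩ := hX.2.2.1 y hy
  exact hX.1.monotone (by have := hX.1.lt_iff_lt.mp hw; omega)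

lemma succ_intervalIdx_of_eq_one (hX : IsEnum η X) (hi : η i = 1) : X (intervalIdx X i + 1) = i :=
  le_antisymm (hX.succ_le_of_lt (intervalIdx_spec hX.1 i).1 hi) (intervalIdx_spec hX.1 i).2

lemma isLeast_Kp (hX : IsEnum η X) (i : ℤ) :
    IsLeast (Kp i η) (X (intervalIdx X i + 1) - i).toNat := by
  obtain ⟨hlt, hle⟩ := intervalIdx_spec hX.1 i
  refine ⟨?_, fun k hk => ?_⟩
  · show η (i + _) = 1
    rw [Int.toNat_of_nonneg (by omega), add_sub_cancel]
    exact hX.2.1 _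
  · have := hX.succ_le_of_lt (show X (intervalIdx X i) < i + k by omega) hk
    omega

lemma isLeast_Km (hX : IsEnum η X) (i : ℤ) :
    IsLeast (Km i η) (i - X (intervalIdx X i)).toNat := by
  obtain ⟨hlt, hle⟩ := intervalIdx_spec hX.1 i
  refine ⟨⟨by omega, ?_⟩, fun k ⟨hk, hk1⟩ => ?_⟩
  · rw [Int.toNat_of_nonneg (by omega), sub_sub_cancel]
    exact hX.2.1 _
  · have := hX.le_of_lt_succ (show i - k < X (intervalIdx X i + 1) by omega) hk1
    omega

lemma add_kplus (hX : IsEnum η X) (i : ℤ) : i + (kplus i η : ℤ) = X (intervalIdx X i + 1) := by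
  rw [kplus, (hX.isLeast_Kp i).csInf_eq]
  have := (intervalIdx_spec hX.1 i).2
  omega

lemma sub_kminus (hX : IsEnum η X) (i : ℤ) : i - (kminus i η : ℤ) = X (intervalIdx X i) := by
  rw [kminus, (hX.isLeast_Km i).csInf_eq]
  have := (intervalIdx_spec hX.1 i).1
  omega

lemma omega1 (hX : IsEnum η X) (hc : IsConfig η) : Omega1 η := by
  refine ⟨hc, Set.infinite_of_injective_forall_mem (f := fun k : ℕ => X (-k - 1)) ?_ ?_,
    Set.infinite_of_injective_forall_mem (f := fun k : ℕ => X (k + 1)) ?_ ?_⟩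
  · exact fun a b h => by have := hX.1.injective h; omega
  · exact fun k => ⟨hX.lt_zero (by omega), hX.2.1 _⟩
  · exact fun a b h => by have := hX.1.injective h; omega
  · exact fun k => ⟨by have := hX.1 (show (0 : ℤ) < k + 1 by omega); have := hX.2.2.2.1; omega,
      hX.2.1 _⟩

end IsEnum

section Toppling

variable {η X : ℤ → ℤ} {i x : ℤ}

lemma T_of_eq_one (hi : η i = 1) : T i η = η + e i := by
  rw [T, if_pos hi]

lemma T_of_ne_one (hX : IsEnum η X) (hi : η i ≠ 1) :
    T i η = η + e (X (intervalIdx X i + 1)) + e (X (intervalIdx X i))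
      - e (X (intervalIdx X i) + X (intervalIdx X i + 1) - i) := by
  have hkp := hX.add_kplus i
  have hkm := hX.sub_kminus i
  have hnew : i + (kplus i η : ℤ) - kminus i η =
      X (intervalIdx X i) + X (intervalIdx X i + 1) - i := by omega
  rw [T, if_neg hi, if_pos ⟨_, (hX.isLeast_Kp i).1⟩, if_pos ⟨_, (hX.isLeast_Km i).1⟩, hnew,
    hkp, hkm]

lemma apply_merged_eq_two (hc : IsConfig η) (hX : IsEnum η X) (hi : η i ≠ 1) :
    η (X (intervalIdx X i) + X (intervalIdx X i + 1) - i) = 2 := by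
  obtain ⟨hlt, hle⟩ := intervalIdx_spec hX.1 i
  have hilt : i < X (intervalIdx X i + 1) :=
    lt_of_le_of_ne hle fun h => hi (h ▸ hX.2.1 _)
  refine (hc _).resolve_left fun h1 => ?_
  have := hX.le_of_lt_succ (show _ < X (intervalIdx X i + 1) by omega) h1
  omega

/-- When `η i = 1` we have `X (w + 1) = i`, so the new one `X w + X (w + 1) - i` is the old
one `X w`: a single description covers both kinds of topplings. -/
lemma T_apply_eq_one_iff (hc : IsConfig η) (hX : IsEnum η X) :
    T i η x = 1 ↔ x = X (intervalIdx X i) + X (intervalIdx X i + 1) - i ∨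
      (η x = 1 ∧ x ≠ X (intervalIdx X i) ∧ x ≠ X (intervalIdx X i + 1)) := by
  obtain ⟨hlt, hle⟩ := intervalIdx_spec hX.1 i
  have hw := hX.2.1 (intervalIdx X i)
  have hw' := hX.2.1 (intervalIdx X i + 1)
  by_cases hi : η i = 1
  · have := hX.succ_intervalIdx_of_eq_one hi
    rw [T_of_eq_one hi]
    simp only [Pi.add_apply, e]
    grind
  · have hp := apply_merged_eq_two hc hX hi
    rw [T_of_ne_one hX hi]
    simp only [Pi.add_apply, Pi.sub_apply, e]
    grind

lemma isConfig_T (hc : IsConfig η) (hX : IsEnum η X) (i : ℤ) : IsConfig (T i η) := by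
  intro x
  obtain ⟨hlt, hle⟩ := intervalIdx_spec hX.1 i
  have hw := hX.2.1 (intervalIdx X i)
  have hw' := hX.2.1 (intervalIdx X i + 1)
  have := hc x
  by_cases hi : η i = 1
  · rw [T_of_eq_one hi]
    simp only [Pi.add_apply, e]
    grind
  · have hp := apply_merged_eq_two hc hX hi
    rw [T_of_ne_one hX hi]
    simp only [Pi.add_apply, Pi.sub_apply, e]
    grind

end Toppling

/-- The ones of `T i η` in increasing order, before the normalization of the index. -/
def Tenum₀ (X : ℤ → ℤ) (i k : ℤ) : ℤ :=
  if k < intervalIdx X i then X k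
  else if k = intervalIdx X i then X (intervalIdx X i) + X (intervalIdx X i + 1) - i
  else X (k + 1)

/-- The shift that moves the first nonnegative value of `Y` to index `0`, provided
`Y (-2) < 0 ≤ Y 0`. -/
def normShift (Y : ℤ → ℤ) : ℤ := if 0 ≤ Y (-1) then -1 else 0

def Tenum (X : ℤ → ℤ) (i : ℤ) (j : ℤ) : ℤ := Tenum₀ X i (j + normShift (Tenum₀ X i))

lemma normShift_eq_neg_one_or_zero (Y : ℤ → ℤ) : normShift Y = -1 ∨ normShift Y = 0 := by
  unfold normShift; split_ifs <;> simp

lemma isEnum_normShift {ζ Y : ℤ → ℤ} (hY : StrictMono Y)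
    (hrange : ∀ y, ζ y = 1 ↔ ∃ k, Y k = y) (h0 : 0 ≤ Y 0) (h2 : Y (-2) < 0) :
    IsEnum ζ (fun j => Y (j + normShift Y)) := by
  have hfirst : 0 ≤ Y (normShift Y) := by unfold normShift; split_ifs <;> assumption
  have hbefore : ∀ k < normShift Y, Y k < 0 := fun k hk => by
    unfold normShift at hk
    split_ifs at hk with h
    · exact (hY.monotone (show k ≤ -2 by omega)).trans_lt h2
    · exact (hY.monotone (show k ≤ -1 by omega)).trans_lt (not_le.mp h)
  refine ⟨fun a b h => hY (by omega), fun j => (hrange _).mpr ⟨_, rfl⟩, fun y hy => ?_,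
    by simpa using hfirst, fun y hy0 hy => ?_⟩
  · obtain ⟨k, rfl⟩ := (hrange y).mp hy
    exact ⟨k - normShift Y, by simp⟩
  · obtain ⟨k, rfl⟩ := (hrange y).mp hy
    have : normShift Y ≤ k := not_lt.mp fun hk => (hbefore k hk).not_ge hy0
    simpa using hY.monotone this

section Tenum

variable {η X X' : ℤ → ℤ} {i j k m : ℤ}

lemma Tenum₀_of_lt (hk : k < intervalIdx X i) : Tenum₀ X i k = X k := by
  rw [Tenum₀, if_pos hk]

lemma Tenum₀_of_gt (hk : intervalIdx X i < k) : Tenum₀ X i k = X (k + 1) := by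
  rw [Tenum₀, if_neg (by omega), if_neg (by omega)]

lemma Tenum₀_intervalIdx :
    Tenum₀ X i (intervalIdx X i) = X (intervalIdx X i) + X (intervalIdx X i + 1) - i := by
  rw [Tenum₀, if_neg (lt_irrefl _), if_pos rfl]

lemma Tenum₀_mem_Icc (hX : StrictMono X) (i k : ℤ) :
    X k ≤ Tenum₀ X i k ∧ Tenum₀ X i k ≤ X (k + 1) := by
  obtain ⟨hlt, hle⟩ := intervalIdx_spec hX i
  have := hX (lt_add_one k)
  rcases lt_trichotomy k (intervalIdx X i) with hk | rfl | hk
  · rw [Tenum₀_of_lt hk]; omega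
  · rw [Tenum₀_intervalIdx]; omega
  · rw [Tenum₀_of_gt hk]; omega

lemma strictMono_Tenum₀ (hX : StrictMono X) (i : ℤ) : StrictMono (Tenum₀ X i) := by
  refine strictMono_int_of_lt_succ fun k => ?_
  have hk := Tenum₀_mem_Icc hX i k
  have hk' := Tenum₀_mem_Icc hX i (k + 1)
  by_cases h : k < intervalIdx X i
  · rw [Tenum₀_of_lt h]
    exact (hX (lt_add_one k)).trans_le hk'.1
  · rw [Tenum₀_of_gt (show intervalIdx X i < k + 1 by omega)]
    exact hk.2.trans_lt (hX (lt_add_one _))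

lemma T_apply_eq_one_iff_exists_Tenum₀ (hc : IsConfig η) (hX : IsEnum η X) (y : ℤ) :
    T i η y = 1 ↔ ∃ k, Tenum₀ X i k = y := by
  rw [T_apply_eq_one_iff hc hX]
  have hinj := hX.1.injective
  constructor
  · rintro (rfl | ⟨hy, hw, hw'⟩)
    · exact ⟨_, Tenum₀_intervalIdx⟩
    · obtain ⟨m, rfl⟩ := hX.2.2.1 y hy
      rcases lt_or_gt_of_ne (show m ≠ intervalIdx X i by rintro rfl; exact hw rfl) with h | h
      · exact ⟨m, Tenum₀_of_lt h⟩
      · refine ⟨m - 1, ?_⟩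
        rw [Tenum₀_of_gt (show intervalIdx X i < m - 1 by
          have : m ≠ intervalIdx X i + 1 := by rintro rfl; exact hw' rfl
          omega), sub_add_cancel]
  · rintro ⟨k, rfl⟩
    rcases lt_trichotomy k (intervalIdx X i) with hk | rfl | hk
    · rw [Tenum₀_of_lt hk]
      exact Or.inr ⟨hX.2.1 k, fun h => by have := hinj h; omega,
        fun h => by have := hinj h; omega⟩
    · exact Or.inl Tenum₀_intervalIdx
    · rw [Tenum₀_of_gt hk]
      exact Or.inr ⟨hX.2.1 _, fun h => by have := hinj h; omega,
        fun h => by have := hinj h; omega⟩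

lemma isEnum_Tenum (hc : IsConfig η) (hX : IsEnum η X) (i : ℤ) :
    IsEnum (T i η) (Tenum X i) :=
  isEnum_normShift (strictMono_Tenum₀ hX.1 i) (T_apply_eq_one_iff_exists_Tenum₀ hc hX)
    (hX.2.2.2.1.trans (Tenum₀_mem_Icc hX.1 i 0).1)
    ((Tenum₀_mem_Icc hX.1 i (-2)).2.trans_lt (hX.lt_zero (by norm_num)))

lemma Tenum_mem_Icc (hX : StrictMono X) (i j : ℤ) :
    X (j - 1) ≤ Tenum X i j ∧ Tenum X i j ≤ X (j + 1) := by
  have h := Tenum₀_mem_Icc hX i (j + normShift (Tenum₀ X i))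
  have hs := normShift_eq_neg_one_or_zero (Tenum₀ X i)
  exact ⟨(hX.monotone (by omega)).trans h.1, h.2.trans (hX.monotone (by omega))⟩

lemma Tenum_eq_of_lt (hX : IsEnum η X) (hm : 1 ≤ m) (hi : X m < i) (hj : j < m) :
    Tenum X i j = X j := by
  have hm' : m ≤ intervalIdx X i := by
    have := hX.1.lt_iff_lt.mp (hi.trans_le (intervalIdx_spec hX.1 i).2)
    omega
  have hs : normShift (Tenum₀ X i) = 0 := by
    have : Tenum₀ X i (-1) < 0 := by
      rw [Tenum₀_of_lt (by omega)]
      exact hX.lt_zero (by norm_num)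
    rw [normShift, if_neg this.not_ge]
  rw [Tenum, hs, add_zero, Tenum₀_of_lt (by omega)]

lemma Tenum_eq_of_le (hX : IsEnum η X) (hm : m ≤ -1) (hi : i ≤ X m) (hj : m < j) :
    Tenum X i j = X j := by
  have hm' : intervalIdx X i < m := hX.1.lt_iff_lt.mp ((intervalIdx_spec hX.1 i).1.trans_le hi)
  have hs : normShift (Tenum₀ X i) = -1 := by
    have : 0 ≤ Tenum₀ X i (-1) := by
      rw [Tenum₀_of_gt (by omega)]
      exact hX.2.2.2.1
    rw [normShift, if_pos this]
  rw [Tenum, hs, Tenum₀_of_gt (by omega), ← sub_eq_add_neg, sub_add_cancel]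

lemma Tenum₀_congr (hX : StrictMono X) (hX' : StrictMono X') {a b : ℤ}
    (hagree : ∀ j, a ≤ j → j ≤ b → X j = X' j) (ha : X a < i) (hb : i ≤ X b)
    (hak : a ≤ k) (hkb : k ≤ b - 1) : Tenum₀ X i k = Tenum₀ X' i k := by
  obtain ⟨hlt, hle⟩ := intervalIdx_spec hX i
  have haw : a ≤ intervalIdx X i := by
    by_contra! h
    have := hX.monotone (show intervalIdx X i + 1 ≤ a by omega)
    omega
  have hwb : intervalIdx X i + 1 ≤ b := by
    by_contra! h
    have := hX.monotone (show b ≤ intervalIdx X i by omega)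
    omega
  have hw := hagree _ haw (by omega)
  have hw' := hagree _ (by omega) hwb
  have hidx : intervalIdx X' i = intervalIdx X i :=
    intervalIdx_eq hX' (hw ▸ hlt) (hw' ▸ hle)
  rcases lt_trichotomy k (intervalIdx X i) with hk | rfl | hk
  · rw [Tenum₀_of_lt hk, Tenum₀_of_lt (hidx ▸ hk), hagree k hak (by omega)]
  · rw [Tenum₀_intervalIdx, ← hidx, Tenum₀_intervalIdx, hidx, hw, hw']
  · rw [Tenum₀_of_gt hk, Tenum₀_of_gt (hidx ▸ hk), hagree _ (by omega) (by omega)]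

lemma Tenum_congr (hX : StrictMono X) (hX' : StrictMono X') {a b : ℤ}
    (hagree : ∀ j, a ≤ j → j ≤ b → X j = X' j) (ha : X a < i) (hb : i ≤ X b)
    (ha2 : a ≤ -2) (hb1 : 1 ≤ b) (haj : a + 1 ≤ j) (hjb : j ≤ b - 1) :
    Tenum X i j = Tenum X' i j := by
  have hs : normShift (Tenum₀ X i) = normShift (Tenum₀ X' i) := by
    rw [normShift, normShift, Tenum₀_congr hX hX' hagree ha hb (by omega) (by omega)]
  have := normShift_eq_neg_one_or_zero (Tenum₀ X i)
  rw [Tenum, Tenum, ← hs, Tenum₀_congr hX hX' hagree ha hb (by omega) (by omega)]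

end Tenum

section Locality

variable {M : ℕ} {g : (ℤ → ℤ) → ℝ} {η X : ℤ → ℤ}

lemma IsNLocal.apply_T_eq (hg : IsNLocal M g) (hc : IsConfig η) (hX : IsEnum η X) {i : ℤ}
    (hi : i ≤ X (-(M : ℤ) - 2) ∨ X ((M : ℤ) + 1) < i) : g (T i η) = g η := by
  refine hg _ _ _ _ ((isEnum_Tenum hc hX i).omega1 (isConfig_T hc hX i)) (hX.omega1 hc)
    (isEnum_Tenum hc hX i) hX fun j hj1 hj2 => ?_
  rcases hi with hi | hi
  · exact Tenum_eq_of_le hX (by omega) hi (by omega)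
  · exact Tenum_eq_of_lt hX (by omega) hi (by omega)

lemma IsNLocal.Lgen_eq_sum (hg : IsNLocal M g) (hc : IsConfig η) (hX : IsEnum η X) :
    Lgen g η = ∑ i ∈ Finset.Ioc (X (-(M : ℤ) - 2)) (X ((M : ℤ) + 1)), (g (T i η) - g η) := by
  refine tsum_eq_sum fun i hi => ?_
  rw [hg.apply_T_eq hc hX, sub_self]
  rw [Finset.mem_Ioc, not_and_or, not_lt, not_le] at hi
  exact hi

lemma isNLocal_Lgen (hg : IsNLocal M g) : IsNLocal (M + 1) (Lgen g) := by
  intro η ζ Xη Xζ hη hζ hXη hXζ hagree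
  have hagree' : ∀ j, -(M : ℤ) - 2 ≤ j → j ≤ (M : ℤ) + 1 → Xη j = Xζ j := fun j h1 h2 =>
    hagree j (by push_cast; omega) (by push_cast; omega)
  have hgη : g η = g ζ :=
    hg η ζ Xη Xζ hη hζ hXη hXζ fun j h1 h2 => hagree' j (by omega) (by omega)
  rw [hg.Lgen_eq_sum hη.1 hXη, hg.Lgen_eq_sum hζ.1 hXζ,
    ← hagree' _ le_rfl (by omega), ← hagree' _ (by omega) le_rfl]
  refine Finset.sum_congr rfl fun i hi => ?_
  rw [Finset.mem_Ioc] at hi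
  rw [hgη, hg _ _ _ _ ((isEnum_Tenum hη.1 hXη i).omega1 (isConfig_T hη.1 hXη i))
    ((isEnum_Tenum hζ.1 hXζ i).omega1 (isConfig_T hζ.1 hXζ i))
    (isEnum_Tenum hη.1 hXη i) (isEnum_Tenum hζ.1 hXζ i)
    fun j h1 h2 => Tenum_congr hXη.1 hXζ.1 hagree' hi.1 hi.2 (by omega) (by omega)
      (by omega) (by omega)]

lemma isNLocal_iterate_Lgen (hg : IsNLocal M g) (n : ℕ) : IsNLocal (M + n) (Lgen^[n] g) := by
  induction n with
  | zero => simpa using hg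
  | succ n ih => simpa only [Function.iterate_succ_apply', ← add_assoc] using isNLocal_Lgen ih

end Locality

/-- `span X m = |I_{-m}| + ⋯ + |I_m|`. -/
def span (X : ℤ → ℤ) (m : ℤ) : ℤ := X m - X (-m - 1)

section Span

variable {X : ℤ → ℤ}

lemma span_nonneg (hX : StrictMono X) {m : ℤ} (hm : 0 ≤ m) : 0 ≤ span X m :=
  sub_nonneg.mpr (hX.monotone (by omega))

lemma span_le_span_add_one (hX : StrictMono X) (m : ℤ) : span X m ≤ span X (m + 1) := by
  have := hX (lt_add_one m)
  have := hX (show -(m + 1) - 1 < -m - 1 by omega)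
  unfold span
  omega

lemma span_Tenum_le (hX : StrictMono X) (i m : ℤ) : span (Tenum X i) m ≤ span X (m + 1) := by
  have := (Tenum_mem_Icc hX i m).2
  have := (Tenum_mem_Icc hX i (-m - 1)).1
  unfold span
  rw [show -(m + 1) - 1 = -m - 1 - 1 by ring]
  omega

lemma card_Ioc_eq_span (hX : StrictMono X) {m : ℤ} (hm : 0 ≤ m) :
    ((Finset.Ioc (X (-m - 1)) (X m)).card : ℝ) = span X m := by
  rw [Int.card_Ioc, ← span]
  exact_mod_cast Int.toNat_of_nonneg (span_nonneg hX hm)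

end Span

theorem abs_iterate_Lgen_le {N : ℕ} {f : (ℤ → ℤ) → ℝ} {C : ℝ} (hf : IsNLocal N f)
    (hC : ∀ ζ, |f ζ| ≤ C) (n : ℕ) {η X : ℤ → ℤ} (hc : IsConfig η) (hX : IsEnum η X) :
    |(Lgen^[n] f) η| ≤ (span X (N + n) : ℝ) ^ n * 2 ^ n * C := by
  induction n generalizing η X with
  | zero => simpa using hC η
  | succ n ih =>
    rw [Nat.cast_succ, ← add_assoc]
    set g := Lgen^[n] f
    set D : ℤ := span X (N + n + 1)
    have hbound {ζ Y : ℤ → ℤ} (hζ : IsConfig ζ) (hY : IsEnum ζ Y) (hYD : span Y (N + n) ≤ D) :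
        |g ζ| ≤ (D : ℝ) ^ n * 2 ^ n * C := by
      have hC0 : 0 ≤ C := (abs_nonneg _).trans (hC η)
      have : (0 : ℝ) ≤ span Y (N + n) := by exact_mod_cast span_nonneg hY.1 (by positivity)
      refine (ih hζ hY).trans ?_
      gcongr
    have hterm (i : ℤ) : |g (T i η) - g η| ≤ 2 * ((D : ℝ) ^ n * 2 ^ n * C) := by
      have h1 := hbound (isConfig_T hc hX i) (isEnum_Tenum hc hX i) (span_Tenum_le hX.1 i _)
      have h2 := hbound hc hX (span_le_span_add_one hX.1 _)
      linarith [abs_sub (g (T i η)) (g η)]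
    rw [Function.iterate_succ_apply', (isNLocal_iterate_Lgen hf n).Lgen_eq_sum hc hX]
    have hIoc : Finset.Ioc (X (-((N + n : ℕ) : ℤ) - 2)) (X ((N + n : ℕ) + 1)) =
        Finset.Ioc (X (-(N + n + 1) - 1)) (X (N + n + 1)) := by
      push_cast
      ring_nf
    calc _ ≤ ∑ i ∈ Finset.Ioc (X (-((N + n : ℕ) : ℤ) - 2)) (X ((N + n : ℕ) + 1)),
            |g (T i η) - g η| := Finset.abs_sum_le_sum_abs _ _
      _ ≤ _ := Finset.sum_le_card_nsmul _ _ _ fun i _ => hterm i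
      _ = _ := by
        rw [nsmul_eq_mul, hIoc, card_Ioc_eq_span hX.1 (by positivity)]
        ring

theorem Lgen_iterate_bound_general (N : ℕ) (f : (ℤ → ℤ) → ℝ) (hf : IsNLocal N f)
    (C : ℝ) (hC : ∀ ζ, |f ζ| ≤ C)
    (η : ℤ → ℤ) (X : ℤ → ℤ) (hη : Omega1 η) (hX : IsEnum η X)
    (n : ℕ) :
    |(Lgen^[n] f) η| ≤
      ((X ((N : ℤ) + n) - X (-(N : ℤ) - n - 1) : ℤ) : ℝ) ^ n * 2 ^ n * C := by
  have h := abs_iterate_Lgen_le hf hC n hη.1 hX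
  rwa [span, show -((N : ℤ) + n) - 1 = -(N : ℤ) - n - 1 by ring] at h

/-- if `f : Ω₁ → ℝ` is `N`-local and bounded by `C = ‖f‖_∞`, then for every
`n ≥ 1` and `η ∈ Ω₁`,
`|Lⁿ f (η)| ≤ (|I_{-N-n}(η)| + … + |I_{N+n}(η)|)ⁿ · 2ⁿ · ‖f‖_∞`,
where `|I_{-N-n}(η)| + … + |I_{N+n}(η)| = X_{N+n}(η) − X_{-N-n-1}(η)`. -/
theorem Lgen_iterate_bound (N : ℕ) (f : (ℤ → ℤ) → ℝ) (hf : IsNLocal N f)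
    (C : ℝ) (hC : ∀ ζ, |f ζ| ≤ C)
    (η : ℤ → ℤ) (X : ℤ → ℤ) (hη : Omega1 η) (hX : IsEnum η X)
    (n : ℕ) (hn : 1 ≤ n) :
    |(Lgen^[n] f) η| ≤
      ((X ((N : ℤ) + n) - X (-(N : ℤ) - n - 1) : ℤ) : ℝ) ^ n * 2 ^ n * C :=
  Lgen_iterate_bound_general N f hf C hC η X hη hX n
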